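/- arXiv:0912.3834 — 2 statements merged into one kernel-verified Lean document; each statement's English description precedes it below -/
import Mathlib

section
/- Let G be a simple digraph containing three distinct vertices u, v, w with arcs (u,v),(v,w),(w,u) and no arcs (v,u),(w,v),(u,w), and suppose there is a vertex x ∉ {u,v,w} such that exactly two of the three arcs (u,x),(v,x),(w,x) are present in G (and, symmetrically, the arcs from x to {u,v,w} are unrestricted). Then G can be transformed by a finite sequence of 2-switches into the digraph G' obtained from G by reorienting the directed 3-cycle on {u,v,w}. -/
/-- A simple directed graph on vertex set `V`: an irreflexive (Boolean) arc
relation, i.e. no self-loops and at most one arc in each direction. -/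
structure SDigraph (V : Type) where
  Adj : V → V → Bool
  irrefl : ∀ v, Adj v v = false

/-- Out-degree of a vertex. -/
def SDigraph.outDeg {V : Type} [Fintype V] [DecidableEq V]
    (G : SDigraph V) (v : V) : ℕ :=
  (Finset.univ.filter fun x => G.Adj v x = true).card

/-- In-degree of a vertex. -/
def SDigraph.inDeg {V : Type} [Fintype V] [DecidableEq V]
    (G : SDigraph V) (v : V) : ℕ :=
  (Finset.univ.filter fun x => G.Adj x v = true).card

/-- `G` realizes the integer-pair (degree) sequence `d`: vertex `v` has
out-degree `(d v).1` and in-degree `(d v).2`. -/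
def Realizes {V : Type} [Fintype V] [DecidableEq V]
    (G : SDigraph V) (d : V → ℕ × ℕ) : Prop :=
  ∀ v, G.outDeg v = (d v).1 ∧ G.inDeg v = (d v).2

/-- `H` is obtained from `G` by a single 2-switch: arcs `(v₁,v₂)`, `(v₃,v₄)`
are replaced by `(v₁,v₄)`, `(v₃,v₂)`, allowed only when the four vertices
are distinct, the former two are arcs and the latter two are not. -/
def TwoSwitch {V : Type} [DecidableEq V] (G H : SDigraph V) : Prop :=
  ∃ v₁ v₂ v₃ v₄ : V,
    v₁ ≠ v₂ ∧ v₁ ≠ v₃ ∧ v₁ ≠ v₄ ∧ v₂ ≠ v₃ ∧ v₂ ≠ v₄ ∧ v₃ ≠ v₄ ∧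
    G.Adj v₁ v₂ = true ∧ G.Adj v₃ v₄ = true ∧
    G.Adj v₁ v₄ = false ∧ G.Adj v₃ v₂ = false ∧
    ∀ x y, H.Adj x y =
      if (x = v₁ ∧ y = v₂) ∨ (x = v₃ ∧ y = v₄) then false
      else if (x = v₁ ∧ y = v₄) ∨ (x = v₃ ∧ y = v₂) then true
      else G.Adj x y

/-- `G` and `H` differ by a single 2-switch (in either direction). -/
def TwoSwitchStep {V : Type} [DecidableEq V] (G H : SDigraph V) : Prop :=
  TwoSwitch G H ∨ TwoSwitch H G

/-- `H` is reachable from `G` by a finite sequence of 2-switches. -/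
def Reach2 {V : Type} [DecidableEq V] (G H : SDigraph V) : Prop :=
  Relation.ReflTransGen TwoSwitchStep G H

/-- `H` is obtained from `G` by reorienting an induced directed 3-cycle:
there are distinct `u v w` with arcs `(u,v),(v,w),(w,u)` and no arcs
`(v,u),(w,v),(u,w)`, and `H` replaces these three arcs by the reversed ones. -/
def CycleReorient {V : Type} [DecidableEq V] (G H : SDigraph V) : Prop :=
  ∃ u v w : V, u ≠ v ∧ v ≠ w ∧ u ≠ w ∧
    G.Adj u v = true ∧ G.Adj v w = true ∧ G.Adj w u = true ∧
    G.Adj v u = false ∧ G.Adj w v = false ∧ G.Adj u w = false ∧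
    ∀ x y, H.Adj x y =
      if (x = u ∨ x = v ∨ x = w) ∧ (y = u ∨ y = v ∨ y = w) then G.Adj y x
      else G.Adj x y

/-- The three vertices `u, v, w` induce a directed 3-cycle in `G`: the induced
subgraph on them consists of exactly the three arcs of one cyclic orientation. -/
def InducesC3 {V : Type} (G : SDigraph V) (u v w : V) : Prop :=
  (G.Adj u v = true ∧ G.Adj v w = true ∧ G.Adj w u = true ∧
    G.Adj v u = false ∧ G.Adj w v = false ∧ G.Adj u w = false) ∨
  (G.Adj v u = true ∧ G.Adj w v = true ∧ G.Adj u w = true ∧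
    G.Adj u v = false ∧ G.Adj v w = false ∧ G.Adj w u = false)

/-- The digraph obtained from `G` by reversing all arcs among `{u, v, w}`
(and leaving all other arcs unchanged).  When `{u,v,w}` induces a directed
3-cycle in `G`, this is exactly the reorientation of that 3-cycle. -/
def flip3 {V : Type} [DecidableEq V] (G : SDigraph V) (u v w : V) : SDigraph V where
  Adj x y :=
    if (x = u ∨ x = v ∨ x = w) ∧ (y = u ∨ y = v ∨ y = w) then G.Adj y x
    else G.Adj x y
  irrefl := by
    intro x
    try simp only []
    rw [ite_self]
    exact G.irrefl x


namespace SDigraph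

variable {V : Type}

@[ext]
lemma ext {G H : SDigraph V} (h : ∀ x y, G.Adj x y = H.Adj x y) : G = H := by
  cases G; cases H
  congr
  funext x y
  exact h x y

variable [DecidableEq V]

/-- The guard `x = y` keeps the result loopless even when `a, b, c, d` are not distinct. -/
def switch (G : SDigraph V) (a b c d : V) : SDigraph V where
  Adj x y :=
    if x = y then false
    else if (x = a ∧ y = b) ∨ (x = c ∧ y = d) then false
    else if (x = a ∧ y = d) ∨ (x = c ∧ y = b) then true
    else G.Adj x y
  irrefl := by simp

@[simp]
lemma switch_adj (G : SDigraph V) (a b c d x y : V) :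
    (G.switch a b c d).Adj x y =
      if x = y then false
      else if (x = a ∧ y = b) ∨ (x = c ∧ y = d) then false
      else if (x = a ∧ y = d) ∨ (x = c ∧ y = b) then true
      else G.Adj x y := rfl

lemma twoSwitch_switch (G : SDigraph V) {a b c d : V}
    (hab : a ≠ b) (hac : a ≠ c) (had : a ≠ d) (hbc : b ≠ c) (hbd : b ≠ d) (hcd : c ≠ d)
    (hGab : G.Adj a b = true) (hGcd : G.Adj c d = true)
    (hGad : G.Adj a d = false) (hGcb : G.Adj c b = false) :
    TwoSwitch G (G.switch a b c d) := by
  refine ⟨a, b, c, d, hab, hac, had, hbc, hbd, hcd, hGab, hGcd, hGad, hGcb, fun x y => ?_⟩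
  simp only [switch_adj]
  split_ifs <;> grind [G.irrefl]

lemma reach2_switch (G : SDigraph V) {a b c d : V}
    (hab : a ≠ b) (hac : a ≠ c) (had : a ≠ d) (hbc : b ≠ c) (hbd : b ≠ d) (hcd : c ≠ d)
    (hGab : G.Adj a b = true) (hGcd : G.Adj c d = true)
    (hGad : G.Adj a d = false) (hGcb : G.Adj c b = false) :
    Reach2 G (G.switch a b c d) :=
  .single (.inl (G.twoSwitch_switch hab hac had hbc hbd hcd hGab hGcd hGad hGcb))

lemma flip3_rotate (G : SDigraph V) (u v w : V) : flip3 G u v w = flip3 G v w u := by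
  ext x y
  simp only [flip3]
  exact if_congr (by tauto) rfl rfl

/- Three 2-switches through `x` reverse the cycle: `(v,x),(w,u) ↦ (v,u),(w,x)`, then
`(v,w),(u,x) ↦ (v,x),(u,w)`, then `(u,v),(w,x) ↦ (u,x),(w,v)`. -/
lemma reach2_flip3_of_adj_adj_not_adj (G : SDigraph V) {u v w x : V}
    (huv : u ≠ v) (hvw : v ≠ w) (huw : u ≠ w)
    (hc : G.Adj u v = true ∧ G.Adj v w = true ∧ G.Adj w u = true ∧
      G.Adj v u = false ∧ G.Adj w v = false ∧ G.Adj u w = false)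
    (hxu : x ≠ u) (hxv : x ≠ v) (hxw : x ≠ w)
    (hux : G.Adj u x = true) (hvx : G.Adj v x = true) (hwx : G.Adj w x = false) :
    Reach2 G (flip3 G u v w) := by
  have hflip : ((G.switch v x w u).switch v w u x).switch u v w x = flip3 G u v w := by
    ext a b
    simp only [switch_adj, flip3]
    split_ifs <;> grind [G.irrefl]
  rw [← hflip]
  refine (reach2_switch _ ?_ ?_ ?_ ?_ ?_ ?_ ?_ ?_ ?_ ?_).trans
    ((reach2_switch _ ?_ ?_ ?_ ?_ ?_ ?_ ?_ ?_ ?_ ?_).trans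
      (reach2_switch _ ?_ ?_ ?_ ?_ ?_ ?_ ?_ ?_ ?_ ?_))
  all_goals grind [switch_adj]

end SDigraph

theorem statement6_general {V : Type} [DecidableEq V] (G : SDigraph V)
    (u v w : V) (huv : u ≠ v) (hvw : v ≠ w) (huw : u ≠ w)
    (hc : G.Adj u v = true ∧ G.Adj v w = true ∧ G.Adj w u = true ∧
      G.Adj v u = false ∧ G.Adj w v = false ∧ G.Adj u w = false)
    (x : V) (hxu : x ≠ u) (hxv : x ≠ v) (hxw : x ≠ w)
    (htwo :
      (G.Adj u x = true ∧ G.Adj v x = true ∧ G.Adj w x = false) ∨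
      (G.Adj u x = true ∧ G.Adj v x = false ∧ G.Adj w x = true) ∨
      (G.Adj u x = false ∧ G.Adj v x = true ∧ G.Adj w x = true)) :
    Reach2 G (flip3 G u v w) := by
  obtain ⟨hGuv, hGvw, hGwu, hGvu, hGwv, hGuw⟩ := hc
  rcases htwo with ⟨hux, hvx, hwx⟩ | ⟨hux, hvx, hwx⟩ | ⟨hux, hvx, hwx⟩
  · exact G.reach2_flip3_of_adj_adj_not_adj huv hvw huw
      ⟨hGuv, hGvw, hGwu, hGvu, hGwv, hGuw⟩ hxu hxv hxw hux hvx hwx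
  · rw [SDigraph.flip3_rotate, SDigraph.flip3_rotate]
    exact G.reach2_flip3_of_adj_adj_not_adj huw.symm huv hvw.symm
      ⟨hGwu, hGuv, hGvw, hGuw, hGvu, hGwv⟩ hxw hxu hxv hwx hux hvx
  · rw [SDigraph.flip3_rotate]
    exact G.reach2_flip3_of_adj_adj_not_adj hvw huw.symm huv.symm
      ⟨hGvw, hGwu, hGuv, hGwv, hGuw, hGvu⟩ hxv hxw hxu hvx hwx hux

/-- if `G` has a directed 3-cycle `(u,v),(v,w),(w,u)` (with no
reverse arcs) and a vertex `x ∉ {u,v,w}` such that exactly two of the arcs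
`(u,x),(v,x),(w,x)` are present, then `G` can be transformed by a finite
sequence of 2-switches into the digraph obtained by reorienting the 3-cycle. -/
theorem statement6 {V : Type} [Fintype V] [DecidableEq V] (G : SDigraph V)
    (u v w : V) (huv : u ≠ v) (hvw : v ≠ w) (huw : u ≠ w)
    (hc : G.Adj u v = true ∧ G.Adj v w = true ∧ G.Adj w u = true ∧
      G.Adj v u = false ∧ G.Adj w v = false ∧ G.Adj u w = false)
    (x : V) (hxu : x ≠ u) (hxv : x ≠ v) (hxw : x ≠ w)
    (htwo :
      (G.Adj u x = true ∧ G.Adj v x = true ∧ G.Adj w x = false) ∨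
      (G.Adj u x = true ∧ G.Adj v x = false ∧ G.Adj w x = true) ∨
      (G.Adj u x = false ∧ G.Adj v x = true ∧ G.Adj w x = true)) :
    Reach2 G (flip3 G u v w) :=
  statement6_general G u v w huv hvw huw hc x hxu hxv hxw htwo
end

section
/- Let d be a digraphic integer-pair sequence such that in every realization G ∈ R(d) the three distinct vertices of a fixed set C = {u,v,w} induce a directed 3-cycle, and fix a realization G ∈ R(d). Partition the vertices outside C into the classes C^0 (no arcs between the vertex and C), C^- (all arcs from the vertex to C, none from C to the vertex), C^+ (all arcs from C to the vertex, none from the vertex to C), and C^± (all arcs in both directions between the vertex and C). Then: (i) for every x ∈ C^0 ∪ C^+ and every y ∈ C^0 ∪ C^- with x ≠ y, (x,y) is not an arc of G; and (ii) for every x ∈ C^± ∪ C^- and every y ∈ C^± ∪ C^+ with x ≠ y, (x,y) is an arc of G. In particular C^± induces a complete digraph (clique) and C^0 induces an independent set. -/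
/-- `x` is in class `C⁰` relative to `C = {u,v,w}`: no arcs between `x` and
`C` in either direction. -/
def InC0 {V : Type} (G : SDigraph V) (u v w x : V) : Prop :=
  G.Adj x u = false ∧ G.Adj x v = false ∧ G.Adj x w = false ∧
  G.Adj u x = false ∧ G.Adj v x = false ∧ G.Adj w x = false

/-- `x` is in class `C⁻`: all three arcs from `x` to `C` are present and no
arcs from `C` to `x`. -/
def InCminus {V : Type} (G : SDigraph V) (u v w x : V) : Prop :=
  G.Adj x u = true ∧ G.Adj x v = true ∧ G.Adj x w = true ∧
  G.Adj u x = false ∧ G.Adj v x = false ∧ G.Adj w x = false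

/-- `x` is in class `C⁺`: all three arcs from `C` to `x` are present and no
arcs from `x` to `C`. -/
def InCplus {V : Type} (G : SDigraph V) (u v w x : V) : Prop :=
  G.Adj x u = false ∧ G.Adj x v = false ∧ G.Adj x w = false ∧
  G.Adj u x = true ∧ G.Adj v x = true ∧ G.Adj w x = true

/-- `x` is in class `C^±`: all six arcs between `x` and `C` are present. -/
def InCpm {V : Type} (G : SDigraph V) (u v w x : V) : Prop :=
  G.Adj x u = true ∧ G.Adj x v = true ∧ G.Adj x w = true ∧
  G.Adj u x = true ∧ G.Adj v x = true ∧ G.Adj w x = true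

namespace SDigraph

variable {V : Type} [Fintype V] [DecidableEq V]

theorem outDeg_eq_of_adj_comp_perm (G H : SDigraph V) (z : V) (σ : Equiv.Perm V)
    (h : ∀ y, H.Adj z y = G.Adj z (σ y)) : H.outDeg z = G.outDeg z :=
  Finset.card_equiv σ fun y => by simp [h]

theorem inDeg_eq_of_adj_comp_perm (G H : SDigraph V) (z : V) (σ : Equiv.Perm V)
    (h : ∀ x, H.Adj x z = G.Adj (σ x) z) : H.inDeg z = G.inDeg z :=
  Finset.card_equiv σ fun x => by simp [h]

end SDigraph

section

variable {V : Type} [DecidableEq V]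

theorem TwoSwitch.exists {G : SDigraph V} {a b c e : V}
    (hab : a ≠ b) (hac : a ≠ c) (hae : a ≠ e) (hbc : b ≠ c) (hbe : b ≠ e) (hce : c ≠ e)
    (hGab : G.Adj a b = true) (hGce : G.Adj c e = true)
    (hGae : G.Adj a e = false) (hGcb : G.Adj c b = false) :
    ∃ H, TwoSwitch G H ∧ H.Adj a b = false ∧ H.Adj c e = false ∧
      H.Adj a e = true ∧ H.Adj c b = true ∧
      ∀ x y, x ≠ a → x ≠ c → H.Adj x y = G.Adj x y := by
  refine ⟨⟨fun x y => if (x = a ∧ y = b) ∨ (x = c ∧ y = e) then false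
      else if (x = a ∧ y = e) ∨ (x = c ∧ y = b) then true else G.Adj x y, fun x => ?_⟩,
    ⟨a, b, c, e, hab, hac, hae, hbc, hbe, hce, hGab, hGce, hGae, hGcb, fun _ _ => rfl⟩, ?_⟩
  · grind [G.irrefl]
  · grind

theorem TwoSwitch.realizes [Fintype V] {G H : SDigraph V} {d : V → ℕ × ℕ}
    (hsw : TwoSwitch G H) (hG : Realizes G d) : Realizes H d := by
  obtain ⟨a, b, c, e, hab, hac, hae, hbc, hbe, hce, hGab, hGce, hGae, hGcb, hH⟩ := hsw
  intro z
  rw [← (hG z).1, ← (hG z).2]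
  -- each row and each column of `H` is the one of `G` permuted by a transposition
  constructor
  · apply G.outDeg_eq_of_adj_comp_perm H z (if z = a ∨ z = c then Equiv.swap b e else 1)
    intro y
    rw [hH]
    split_ifs <;> grind [Equiv.Perm.one_apply]
  · apply G.inDeg_eq_of_adj_comp_perm H z (if z = b ∨ z = e then Equiv.swap a c else 1)
    intro y
    rw [hH]
    split_ifs <;> grind [Equiv.Perm.one_apply]

end

theorem InducesC3.adj_ne {V : Type} {G : SDigraph V} {u v w : V} (h : InducesC3 G u v w) :
    G.Adj u v ≠ G.Adj v u := by
  rcases h with ⟨huv, -, -, hvu, -⟩ | ⟨hvu, -, -, huv, -⟩ <;> simp [huv, hvu]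

section

variable {V : Type} [Fintype V] [DecidableEq V] {d : V → ℕ × ℕ} {G : SDigraph V} {a b x y : V}

theorem adj_eq_false_of_forall_realizes_adj_ne
    (hpair : ∀ H, Realizes H d → H.Adj a b ≠ H.Adj b a) (hG : Realizes G d)
    (hab : a ≠ b) (hxy : x ≠ y) (hxa : x ≠ a) (hxb : x ≠ b) (hya : y ≠ a) (hyb : y ≠ b)
    (hGxa : G.Adj x a = false) (hGxb : G.Adj x b = false)
    (hGay : G.Adj a y = false) (hGby : G.Adj b y = false) :
    G.Adj x y = false := by
  wlog hGab : G.Adj a b = true generalizing a b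
  · exact this (fun H hH => (hpair H hH).symm) hab.symm hxb hxa hyb hya hGxb hGxa hGby hGay
      (by simpa [hGab] using hpair G hG)
  by_contra hGxy
  obtain ⟨H, hsw, hHab, -, -, -, hrow⟩ := TwoSwitch.exists hab hxa.symm hya.symm hxb.symm
    hyb.symm hxy hGab (Bool.not_eq_false _ ▸ hGxy) hGay hGxb
  have hHba : H.Adj b a = false := by
    rw [hrow b a hab.symm hxb.symm]
    simpa [hGab] using (hpair G hG).symm
  exact hpair H (hsw.realizes hG) (hHab.trans hHba.symm)

theorem adj_eq_true_of_forall_realizes_adj_ne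
    (hpair : ∀ H, Realizes H d → H.Adj a b ≠ H.Adj b a) (hG : Realizes G d)
    (hab : a ≠ b) (hxy : x ≠ y) (hxa : x ≠ a) (hxb : x ≠ b) (hya : y ≠ a) (hyb : y ≠ b)
    (hGxa : G.Adj x a = true) (hGxb : G.Adj x b = true)
    (hGay : G.Adj a y = true) (hGby : G.Adj b y = true) :
    G.Adj x y = true := by
  wlog hGab : G.Adj a b = true generalizing a b
  · exact this (fun H hH => (hpair H hH).symm) hab.symm hxb hxa hyb hya hGxb hGxa hGby hGay
      (by simpa [hGab] using hpair G hG)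
  by_contra hGxy
  obtain ⟨H, hsw, -, -, hHba, -, hrow⟩ := TwoSwitch.exists hyb.symm hxb.symm hab.symm hxy.symm
    hya hxa hGby hGxa (by simpa [hGab] using (hpair G hG).symm) (Bool.not_eq_true _ ▸ hGxy)
  have hHab : H.Adj a b = true := by rw [hrow a b hab hxa.symm, hGab]
  exact hpair H (hsw.realizes hG) (hHab.trans hHba.symm)

end

theorem statement10_general {V : Type} [Fintype V] [DecidableEq V] (d : V → ℕ × ℕ)
    (u v w : V) (huv : u ≠ v)
    (hanchor : ∀ G : SDigraph V, Realizes G d → InducesC3 G u v w)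
    (G : SDigraph V) (hG : Realizes G d)
    (x y : V) (hxy : x ≠ y)
    (hxu : x ≠ u) (hxv : x ≠ v)
    (hyu : y ≠ u) (hyv : y ≠ v) :
    ((InC0 G u v w x ∨ InCplus G u v w x) →
      (InC0 G u v w y ∨ InCminus G u v w y) → G.Adj x y = false) ∧
    ((InCpm G u v w x ∨ InCminus G u v w x) →
      (InCpm G u v w y ∨ InCplus G u v w y) → G.Adj x y = true) := by
  have hpair : ∀ H, Realizes H d → H.Adj u v ≠ H.Adj v u := fun H hH => (hanchor H hH).adj_ne
  constructor
  · intro hx hy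
    obtain ⟨hGxu, hGxv⟩ : G.Adj x u = false ∧ G.Adj x v = false := by
      rcases hx with h | h <;> exact ⟨h.1, h.2.1⟩
    obtain ⟨hGuy, hGvy⟩ : G.Adj u y = false ∧ G.Adj v y = false := by
      rcases hy with h | h <;> exact ⟨h.2.2.2.1, h.2.2.2.2.1⟩
    exact adj_eq_false_of_forall_realizes_adj_ne hpair hG huv hxy hxu hxv hyu hyv
      hGxu hGxv hGuy hGvy
  · intro hx hy
    obtain ⟨hGxu, hGxv⟩ : G.Adj x u = true ∧ G.Adj x v = true := by
      rcases hx with h | h <;> exact ⟨h.1, h.2.1⟩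
    obtain ⟨hGuy, hGvy⟩ : G.Adj u y = true ∧ G.Adj v y = true := by
      rcases hy with h | h <;> exact ⟨h.2.2.2.1, h.2.2.2.2.1⟩
    exact adj_eq_true_of_forall_realizes_adj_ne hpair hG huv hxy hxu hxv hyu hyv
      hGxu hGxv hGuy hGvy

/-- suppose every realization of the digraphic sequence `d`
induces a directed 3-cycle on the distinct vertices `u, v, w`, and fix a
realization `G`.  Then for distinct vertices `x, y` outside `C = {u,v,w}`:
(i) if `x ∈ C⁰ ∪ C⁺` and `y ∈ C⁰ ∪ C⁻` then `(x,y)` is not an arc;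
(ii) if `x ∈ C^± ∪ C⁻` and `y ∈ C^± ∪ C⁺` then `(x,y)` is an arc.
In particular `C^±` induces a clique and `C⁰` an independent set. -/
theorem statement10 {V : Type} [Fintype V] [DecidableEq V] (d : V → ℕ × ℕ)
    (u v w : V) (huv : u ≠ v) (hvw : v ≠ w) (huw : u ≠ w)
    (hanchor : ∀ G : SDigraph V, Realizes G d → InducesC3 G u v w)
    (G : SDigraph V) (hG : Realizes G d)
    (x y : V) (hxy : x ≠ y)
    (hxu : x ≠ u) (hxv : x ≠ v) (hxw : x ≠ w)
    (hyu : y ≠ u) (hyv : y ≠ v) (hyw : y ≠ w) :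
    ((InC0 G u v w x ∨ InCplus G u v w x) →
      (InC0 G u v w y ∨ InCminus G u v w y) → G.Adj x y = false) ∧
    ((InCpm G u v w x ∨ InCminus G u v w x) →
      (InCpm G u v w y ∨ InCplus G u v w y) → G.Adj x y = true) :=
  statement10_general d u v w huv hanchor G hG x y hxy hxu hxv hyu hyv
end
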